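/- (Remark 5.1) If e(0) = 0, then for all t ≥ 0, ‖e(t) + x̃(t)‖_∞ ≤ γ^{-1/2} ε_{V1} (1 + κ^{1/2} ε_{V2}), where ε_{V1} := ‖W̃(0) Λ^{1/2}‖_F / √(λ_min(P)) and ε_{V2} := √(λ_max(P) / (2 ξ λ_min(R))); in particular, for fixed κ the L∞ distance between the plant state and the ideal reference state can be made arbitrarily small by taking the learning rate γ sufficiently large. -/

import Mathlib

/-!
V* is a Lyapunov function for the closed loop. Along solutions the Lyapunov equation turns the
drift of each quadratic term into a `-R`-form, the adaptive law makes the weight-error term cancel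
the `B Λ W̃ᵀ σ` term of the error dynamics, and the filter couplings leave
`-2κ dᵀPd + 2cκ x̃ᵀPd` with `d = e - e_L` and `c = 2ξ λ_min(R) / (κ λ_max(P))` the weight of the
`x̃` term. Young's inequality with weight `c / 2` bounds the cross term by `2κ dᵀPd` plus a multiple
of `x̃ᵀPx̃` that `-c x̃ᵀRx̃` absorbs because `ξ < 1`. Hence
`V*(t) ≤ V*(0) = γ⁻¹ ‖W̃(0) Λ^{1/2}‖_F²`, and since `V*` dominates `λ_min(P) |e|²` and
`c λ_min(P) |x̃|²`, both `e` and `x̃` are `O(γ^{-1/2})` in the Euclidean, hence the sup, norm.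
-/

open Matrix Filter

noncomputable section

/-- Euclidean norm ‖·‖₂ of a vector. -/
def norm2 {n : ℕ} (v : Fin n → ℝ) : ℝ := Real.sqrt (∑ i, v i ^ 2)

/-- Supremum (infinity) norm ‖·‖_∞ of a vector (the sup norm on `Fin n → ℝ`). -/
def normInf {n : ℕ} (v : Fin n → ℝ) : ℝ := ‖v‖

/-- Frobenius norm ‖·‖_F of a matrix. -/
def normF {N m : ℕ} (W : Matrix (Fin N) (Fin m) ℝ) : ℝ := Real.sqrt (∑ i, ∑ j, W i j ^ 2)

/-- Smallest eigenvalue λ_min of a real symmetric (Hermitian) matrix. -/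
def lamMin {n : ℕ} {A : Matrix (Fin n) (Fin n) ℝ} (hA : A.IsHermitian) : ℝ := ⨅ i, hA.eigenvalues i

/-- Largest eigenvalue λ_max of a real symmetric (Hermitian) matrix. -/
def lamMax {n : ℕ} {A : Matrix (Fin n) (Fin n) ℝ} (hA : A.IsHermitian) : ℝ := ⨆ i, hA.eigenvalues i

/-- A real square matrix is Hurwitz if every (complex) eigenvalue has negative real part. -/
def Hurwitz {n : ℕ} (A : Matrix (Fin n) (Fin n) ℝ) : Prop :=
  ∀ μ : ℂ, (A.map Complex.ofReal).charpoly.IsRoot μ → μ.re < 0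

/-- The Lyapunov function V(e, W̃) = eᵀ P e + γ⁻¹ tr((W̃ Λ^{1/2})ᵀ (W̃ Λ^{1/2})). -/
def Vlyap {n N m : ℕ} (γ : ℝ) (P : Matrix (Fin n) (Fin n) ℝ)
    (Lhalf : Matrix (Fin m) (Fin m) ℝ) (e : Fin n → ℝ) (W : Matrix (Fin N) (Fin m) ℝ) : ℝ :=
  e ⬝ᵥ (P *ᵥ e) + γ⁻¹ * ((W * Lhalf)ᵀ * (W * Lhalf)).trace

/-- The augmented Lyapunov function V* of Theorem 5.1. -/
def Vstar {n N m : ℕ} (γ κ η ξ : ℝ) (P R : Matrix (Fin n) (Fin n) ℝ)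
    (hP : P.IsHermitian) (hR : R.IsHermitian)
    (Lhalf : Matrix (Fin m) (Fin m) ℝ)
    (e : Fin n → ℝ) (W : Matrix (Fin N) (Fin m) ℝ) (eL xt : Fin n → ℝ) : ℝ :=
  Vlyap γ P Lhalf e W + η⁻¹ * κ * (eL ⬝ᵥ (P *ᵥ eL))
    + 2 * ξ * κ⁻¹ * (lamMax hP)⁻¹ * lamMin hR * (xt ⬝ᵥ (P *ᵥ xt))

namespace Matrix

section QuadraticForm

variable {ι : Type*} [Fintype ι]

lemma IsHermitian.dotProduct_mulVec_comm {P : Matrix ι ι ℝ} (hP : P.IsHermitian) (u v : ι → ℝ) :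
    u ⬝ᵥ (P *ᵥ v) = v ⬝ᵥ (P *ᵥ u) := by
  rw [dotProduct_mulVec, ← mulVec_transpose, show Pᵀ = P from hP, dotProduct_comm]

lemma dotProduct_self_nonneg (v : ι → ℝ) : 0 ≤ v ⬝ᵥ v := by
  simpa using dotProduct_self_star_nonneg v

lemma PosSemidef.dotProduct_mulVec_self_nonneg {P : Matrix ι ι ℝ} (hP : P.PosSemidef)
    (v : ι → ℝ) : 0 ≤ v ⬝ᵥ (P *ᵥ v) := by
  simpa using hP.dotProduct_mulVec_nonneg v

lemma PosSemidef.two_mul_dotProduct_mulVec_le {P : Matrix ι ι ℝ} (hP : P.PosSemidef)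
    (u v : ι → ℝ) : 2 * (u ⬝ᵥ (P *ᵥ v)) ≤ u ⬝ᵥ (P *ᵥ u) + v ⬝ᵥ (P *ᵥ v) := by
  have h := hP.dotProduct_mulVec_self_nonneg (u - v)
  simp only [mulVec_sub, dotProduct_sub, sub_dotProduct, hP.1.dotProduct_mulVec_comm v u] at h
  linarith

variable [DecidableEq ι] {A : Matrix ι ι ℝ}

lemma IsHermitian.dotProduct_mulVec_eq_sum_eigenvalues (hA : A.IsHermitian) (v : ι → ℝ) :
    v ⬝ᵥ (A *ᵥ v)
      = ∑ i, hA.eigenvalues i * (star (hA.eigenvectorUnitary : Matrix ι ι ℝ) *ᵥ v) i ^ 2 := by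
  set U : Matrix ι ι ℝ := (hA.eigenvectorUnitary : Matrix ι ι ℝ)
  have hA' : A = U * diagonal hA.eigenvalues * star U := by simpa using hA.spectral_theorem
  calc v ⬝ᵥ (A *ᵥ v) = v ⬝ᵥ ((U * diagonal hA.eigenvalues * star U) *ᵥ v) := by
        rw [← hA']
    _ = _ := by
      rw [← mulVec_mulVec, ← mulVec_mulVec, dotProduct_mulVec (A := U), ← mulVec_transpose]
      simp only [dotProduct, mulVec_diagonal, star_eq_conjTranspose,
        conjTranspose_eq_transpose_of_trivial]
      exact Finset.sum_congr rfl fun i _ => by ring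

lemma IsHermitian.sum_sq_star_eigenvectorUnitary_mulVec (hA : A.IsHermitian) (v : ι → ℝ) :
    ∑ i, (star (hA.eigenvectorUnitary : Matrix ι ι ℝ) *ᵥ v) i ^ 2 = v ⬝ᵥ v := by
  set U : Matrix ι ι ℝ := (hA.eigenvectorUnitary : Matrix ι ι ℝ)
  have hU : U * star U = 1 := Unitary.mul_star_self_of_mem hA.eigenvectorUnitary.2
  calc ∑ i, (star U *ᵥ v) i ^ 2 = (star U *ᵥ v) ⬝ᵥ (star U *ᵥ v) := by simp [dotProduct, sq]
    _ = v ⬝ᵥ v := by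
      rw [dotProduct_mulVec, star_eq_conjTranspose, conjTranspose_eq_transpose_of_trivial,
        vecMul_transpose, mulVec_mulVec, ← conjTranspose_eq_transpose_of_trivial,
        ← star_eq_conjTranspose, hU, one_mulVec]

lemma IsHermitian.mul_dotProduct_self_le {μ : ℝ} (hA : A.IsHermitian)
    (hμ : ∀ i, μ ≤ hA.eigenvalues i) (v : ι → ℝ) : μ * (v ⬝ᵥ v) ≤ v ⬝ᵥ (A *ᵥ v) := by
  rw [hA.dotProduct_mulVec_eq_sum_eigenvalues, ← hA.sum_sq_star_eigenvectorUnitary_mulVec,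
    Finset.mul_sum]
  gcongr with i
  exact hμ i

lemma IsHermitian.dotProduct_mulVec_le_mul {μ : ℝ} (hA : A.IsHermitian)
    (hμ : ∀ i, hA.eigenvalues i ≤ μ) (v : ι → ℝ) : v ⬝ᵥ (A *ᵥ v) ≤ μ * (v ⬝ᵥ v) := by
  rw [hA.dotProduct_mulVec_eq_sum_eigenvalues, ← hA.sum_sq_star_eigenvectorUnitary_mulVec,
    Finset.mul_sum]
  gcongr with i
  exact hμ i

end QuadraticForm

end Matrix

section Eigenvalues

variable {n : ℕ} {A : Matrix (Fin n) (Fin n) ℝ}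

lemma lamMin_mul_dotProduct_self_le (hA : A.IsHermitian) (v : Fin n → ℝ) :
    lamMin hA * (v ⬝ᵥ v) ≤ v ⬝ᵥ (A *ᵥ v) :=
  hA.mul_dotProduct_self_le (fun i => ciInf_le (Set.finite_range _).bddBelow i) v

lemma dotProduct_mulVec_le_lamMax_mul (hA : A.IsHermitian) (v : Fin n → ℝ) :
    v ⬝ᵥ (A *ᵥ v) ≤ lamMax hA * (v ⬝ᵥ v) :=
  hA.dotProduct_mulVec_le_mul (fun i => le_ciSup (Set.finite_range _).bddAbove i) v

variable [NeZero n]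

lemma lamMin_pos (hA : A.PosDef) : 0 < lamMin hA.1 := by
  obtain ⟨i, hi⟩ := exists_eq_ciInf_of_finite (f := hA.1.eigenvalues)
  rw [lamMin, ← hi]
  exact hA.eigenvalues_pos i

lemma lamMax_pos (hA : A.PosDef) : 0 < lamMax hA.1 :=
  (hA.eigenvalues_pos 0).trans_le (le_ciSup (Set.finite_range _).bddAbove 0)

end Eigenvalues

lemma norm_le_of_dotProduct_self_le_sq {ι : Type*} [Fintype ι] {v : ι → ℝ} {b : ℝ} (hb : 0 ≤ b)
    (h : v ⬝ᵥ v ≤ b ^ 2) : ‖v‖ ≤ b := by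
  refine (pi_norm_le_iff_of_nonneg hb).2 fun i => ?_
  have hvi : v i ^ 2 ≤ v ⬝ᵥ v := by
    simpa [dotProduct, sq] using
      Finset.single_le_sum (fun j _ => mul_self_nonneg (v j)) (Finset.mem_univ i)
  exact (Real.norm_eq_abs _).trans_le (abs_le_of_sq_le_sq (hvi.trans h) hb)

section Derivatives

variable {ι : Type*} [Fintype ι] {t : ℝ}

lemma HasDerivAt.dotProduct {u v : ℝ → ι → ℝ} {u' v' : ι → ℝ} (hu : HasDerivAt u u' t)
    (hv : HasDerivAt v v' t) :
    HasDerivAt (fun s => u s ⬝ᵥ v s) (u' ⬝ᵥ v t + u t ⬝ᵥ v') t := by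
  have h : HasDerivAt (fun s => ∑ i, u s i * v s i) (∑ i, (u' i * v t i + u t i * v' i)) t :=
    HasDerivAt.fun_sum fun i _ => (hasDerivAt_pi.1 hu i).mul (hasDerivAt_pi.1 hv i)
  rwa [Finset.sum_add_distrib] at h

lemma HasDerivAt.const_mulVec {κ : Type*} [Fintype κ] (A : Matrix κ ι ℝ) {u : ℝ → ι → ℝ}
    {u' : ι → ℝ} (hu : HasDerivAt u u' t) : HasDerivAt (fun s => A *ᵥ u s) (A *ᵥ u') t :=
  (A.mulVecLin.toContinuousLinearMap.hasFDerivAt (x := u t)).comp_hasDerivAt t hu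

lemma HasDerivAt.dotProduct_mulVec_self {P : Matrix ι ι ℝ} (hP : P.IsHermitian)
    {u : ℝ → ι → ℝ} {u' : ι → ℝ} (hu : HasDerivAt u u' t) :
    HasDerivAt (fun s => u s ⬝ᵥ (P *ᵥ u s)) (2 * (u t ⬝ᵥ (P *ᵥ u'))) t := by
  convert hu.dotProduct (hu.const_mulVec P) using 1
  rw [hP.dotProduct_mulVec_comm u' (u t)]
  ring

end Derivatives

section Frobenius

variable {ι κ : Type*} [Fintype κ] {t : ℝ}

lemma trace_transpose_mul_self_eq_normF_sq {N m : ℕ} (M : Matrix (Fin N) (Fin m) ℝ) :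
    (Mᵀ * M).trace = normF M ^ 2 := by
  rw [normF, Real.sq_sqrt (by positivity), Finset.sum_comm]
  simp [Matrix.trace, Matrix.mul_apply, sq]

lemma HasDerivAt.trace_transpose_mul_self [Fintype ι] {M : ℝ → Matrix ι κ ℝ} {M' : Matrix ι κ ℝ}
    (h : ∀ i j, HasDerivAt (fun s => M s i j) (M' i j) t) :
    HasDerivAt (fun s => ((M s)ᵀ * M s).trace) (2 * ((M t)ᵀ * M').trace) t := by
  have hcol : ∀ j, HasDerivAt (fun s i => M s i j) (fun i => M' i j) t :=
    fun j => hasDerivAt_pi.2 fun i => h i j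
  have hsum := HasDerivAt.fun_sum (u := Finset.univ) fun j _ => (hcol j).dotProduct (hcol j)
  refine hsum.congr_deriv ?_
  simp only [dotProduct_comm (fun i => M' i _), ← two_mul, ← Finset.mul_sum]
  rfl

lemma HasDerivAt.matrix_mul_const {μ : Type*} {W : ℝ → Matrix ι κ ℝ} {W' : Matrix ι κ ℝ}
    (L : Matrix κ μ ℝ) (h : ∀ i j, HasDerivAt (fun s => W s i j) (W' i j) t) (i : ι) (j : μ) :
    HasDerivAt (fun s => (W s * L) i j) ((W' * L) i j) t :=
  HasDerivAt.fun_sum fun k _ => (h i k).mul_const (L k j)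

lemma trace_transpose_mul_vecMulVec_mul [Fintype ι] {W : Matrix ι κ ℝ} {L Λ : Matrix κ κ ℝ}
    (hL : L.IsDiag) (hLL : L * L = Λ) (σ : ι → ℝ) (u : κ → ℝ) :
    ((W * L)ᵀ * (vecMulVec σ u * L)).trace = u ⬝ᵥ ((Λ * Wᵀ) *ᵥ σ) := by
  rw [transpose_mul, hL.isSymm.eq, trace_mul_comm, Matrix.mul_assoc, ← Matrix.mul_assoc L, hLL,
    vecMulVec_mul, trace_vecMulVec, dotProduct_comm, dotProduct_mulVec]

end Frobenius

section ClosedLoop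

variable {n : ℕ} {Ar P R : Matrix (Fin n) (Fin n) ℝ}

lemma two_mul_dotProduct_mulVec_of_lyapunov (hP : P.IsHermitian)
    (hLyap : Arᵀ * P + P * Ar + R = 0) (v : Fin n → ℝ) :
    2 * (v ⬝ᵥ (P *ᵥ (Ar *ᵥ v))) = -(v ⬝ᵥ (R *ᵥ v)) := by
  have h := congrArg (fun M => v ⬝ᵥ (M *ᵥ v)) hLyap
  simp only [add_mulVec, dotProduct_add, zero_mulVec, dotProduct_zero, ← mulVec_mulVec] at h
  have hsymm : v ⬝ᵥ (Arᵀ *ᵥ (P *ᵥ v)) = v ⬝ᵥ (P *ᵥ (Ar *ᵥ v)) := by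
    rw [dotProduct_mulVec, vecMul_transpose]
    exact hP.dotProduct_mulVec_comm _ _
  linarith

lemma closedLoop_rate_nonpos (hP : P.PosSemidef) (hR : R.PosSemidef) {κ η c : ℝ} (hκ : 0 ≤ κ)
    (hη : 0 ≤ η) (hc : 0 ≤ c) (hcκ : c * κ * lamMax hP.1 ≤ 2 * lamMin hR.1) (e eL x : Fin n → ℝ) :
    -(e ⬝ᵥ (R *ᵥ e)) - η⁻¹ * κ * (eL ⬝ᵥ (R *ᵥ eL)) - 2 * κ * ((e - eL) ⬝ᵥ (P *ᵥ (e - eL)))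
      - c * (x ⬝ᵥ (R *ᵥ x)) + 2 * c * κ * (x ⬝ᵥ (P *ᵥ (e - eL))) ≤ 0 := by
  set d := e - eL
  -- Young with weight `c / 2`; `hcκ` lets `-c xᵀRx` absorb the resulting `xᵀPx` term.
  have hyoung := hP.two_mul_dotProduct_mulVec_le ((c / 2) • x) d
  simp only [mulVec_smul, dotProduct_smul, smul_dotProduct, smul_eq_mul] at hyoung
  have hcross := mul_le_mul_of_nonneg_left hyoung (by positivity : 0 ≤ 2 * κ)
  have hxx : 0 ≤ x ⬝ᵥ x := dotProduct_self_nonneg x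
  have hxP : κ * c ^ 2 / 2 * (x ⬝ᵥ (P *ᵥ x)) ≤ c * (x ⬝ᵥ (R *ᵥ x)) :=
    calc κ * c ^ 2 / 2 * (x ⬝ᵥ (P *ᵥ x))
        ≤ κ * c ^ 2 / 2 * (lamMax hP.1 * (x ⬝ᵥ x)) := by
          gcongr
          exact dotProduct_mulVec_le_lamMax_mul hP.1 x
      _ = c / 2 * (c * κ * lamMax hP.1) * (x ⬝ᵥ x) := by ring
      _ ≤ c / 2 * (2 * lamMin hR.1) * (x ⬝ᵥ x) := by gcongr
      _ = c * (lamMin hR.1 * (x ⬝ᵥ x)) := by ring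
      _ ≤ c * (x ⬝ᵥ (R *ᵥ x)) := by
          gcongr
          exact lamMin_mul_dotProduct_self_le hR.1 x
  have hRe := hR.dotProduct_mulVec_self_nonneg e
  have hReL := mul_nonneg (mul_nonneg (inv_nonneg.2 hη) hκ) (hR.dotProduct_mulVec_self_nonneg eL)
  linarith

end ClosedLoop

section Vstar

variable {n N m : ℕ} {Ar P R : Matrix (Fin n) (Fin n) ℝ} {B : Matrix (Fin n) (Fin m) ℝ}
  {Lam Lhalf : Matrix (Fin m) (Fin m) ℝ} {γ κ η ξ : ℝ}

lemma hasDerivAt_Vstar (hP : P.IsHermitian) (hR : R.IsHermitian)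
    (hLyap : Arᵀ * P + P * Ar + R = 0) (hLhalfDiag : Lhalf.IsDiag) (hLhalfSq : Lhalf * Lhalf = Lam)
    (hγ : γ ≠ 0) (hη : η ≠ 0) {σ : Fin N → ℝ} {e eL xt : ℝ → Fin n → ℝ}
    {Wt : ℝ → Matrix (Fin N) (Fin m) ℝ} {t : ℝ}
    (he : HasDerivAt e (Ar *ᵥ e t - (B * Lam * (Wt t)ᵀ) *ᵥ σ - κ • (e t - eL t)) t)
    (hW : ∀ i j, HasDerivAt (fun s => Wt s i j) (γ * (σ i * ((e t) ᵥ* (P * B)) j)) t)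
    (heL : HasDerivAt eL (Ar *ᵥ eL t + η • (e t - eL t)) t)
    (hxt : HasDerivAt xt (Ar *ᵥ xt t + κ • (e t - eL t)) t) :
    HasDerivAt (fun s => Vstar γ κ η ξ P R hP hR Lhalf (e s) (Wt s) (eL s) (xt s))
      (-(e t ⬝ᵥ (R *ᵥ e t)) - η⁻¹ * κ * (eL t ⬝ᵥ (R *ᵥ eL t))
        - 2 * κ * ((e t - eL t) ⬝ᵥ (P *ᵥ (e t - eL t)))
        - 2 * ξ * κ⁻¹ * (lamMax hP)⁻¹ * lamMin hR * (xt t ⬝ᵥ (R *ᵥ xt t))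
        + 2 * (2 * ξ * κ⁻¹ * (lamMax hP)⁻¹ * lamMin hR) * κ * (xt t ⬝ᵥ (P *ᵥ (e t - eL t)))) t := by
  set c := 2 * ξ * κ⁻¹ * (lamMax hP)⁻¹ * lamMin hR
  set W' := γ • vecMulVec σ (e t ᵥ* (P * B))
  have hWL := HasDerivAt.trace_transpose_mul_self (HasDerivAt.matrix_mul_const (W' := W') Lhalf hW)
  have hV := (((he.dotProduct_mulVec_self hP).add (hWL.const_mul γ⁻¹)).add
    ((heL.dotProduct_mulVec_self hP).const_mul (η⁻¹ * κ))).add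
    ((hxt.dotProduct_mulVec_self hP).const_mul c)
  refine hV.congr_deriv ?_
  -- the adaptive law `W̃' = γ σ eᵀPB` is what makes the weight-error term cancel
  have htrace : ((Wt t * Lhalf)ᵀ * (W' * Lhalf)).trace
      = γ * (e t ⬝ᵥ (P *ᵥ ((B * Lam * (Wt t)ᵀ) *ᵥ σ))) := by
    rw [smul_mul, Matrix.mul_smul, trace_smul,
      trace_transpose_mul_vecMulVec_mul hLhalfDiag hLhalfSq, smul_eq_mul, Matrix.mul_assoc B,
      ← mulVec_mulVec (M := B), dotProduct_mulVec (e t) P, dotProduct_mulVec _ B, vecMul_vecMul]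
  set d := e t - eL t
  have hd : d ⬝ᵥ (P *ᵥ d) = e t ⬝ᵥ (P *ᵥ d) - eL t ⬝ᵥ (P *ᵥ d) := sub_dotProduct _ _ _
  simp only [mulVec_add, mulVec_sub, mulVec_smul, dotProduct_add, dotProduct_sub,
    dotProduct_smul, smul_eq_mul, htrace]
  linear_combination two_mul_dotProduct_mulVec_of_lyapunov hP hLyap (e t)
    + η⁻¹ * κ * two_mul_dotProduct_mulVec_of_lyapunov hP hLyap (eL t)
    + c * two_mul_dotProduct_mulVec_of_lyapunov hP hLyap (xt t) + 2 * κ * hd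
    + 2 * κ * (eL t ⬝ᵥ (P *ᵥ d)) * inv_mul_cancel₀ hη
    + 2 * (e t ⬝ᵥ (P *ᵥ ((B * Lam * (Wt t)ᵀ) *ᵥ σ))) * inv_mul_cancel₀ hγ

lemma Vstar_zero (hP : P.IsHermitian) (hR : R.IsHermitian) (W : Matrix (Fin N) (Fin m) ℝ) :
    Vstar γ κ η ξ P R hP hR Lhalf 0 W 0 0 = γ⁻¹ * normF (W * Lhalf) ^ 2 := by
  rw [Vstar, Vlyap, trace_transpose_mul_self_eq_normF_sq]
  simp

variable [NeZero n]

lemma Vstar_coeff_pos (hP : P.PosDef) (hR : R.PosDef) (hκ : 0 < κ) (hξ : 0 < ξ) :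
    0 < 2 * ξ * κ⁻¹ * (lamMax hP.1)⁻¹ * lamMin hR.1 := by
  have := lamMax_pos hP
  have := lamMin_pos hR
  positivity

lemma Vstar_antitoneOn (hP : P.PosDef) (hR : R.PosDef) (hLyap : Arᵀ * P + P * Ar + R = 0)
    (hLhalfDiag : Lhalf.IsDiag) (hLhalfSq : Lhalf * Lhalf = Lam)
    (hγ : 0 < γ) (hκ : 0 < κ) (hη : 0 < η) (hξ0 : 0 < ξ) (hξ1 : ξ ≤ 1) {σx : ℝ → Fin N → ℝ}
    {e eL xt : ℝ → Fin n → ℝ} {Wt : ℝ → Matrix (Fin N) (Fin m) ℝ}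
    (he : ∀ t ≥ (0:ℝ), HasDerivAt e
          (Ar *ᵥ e t - (B * Lam * (Wt t)ᵀ) *ᵥ σx t - κ • (e t - eL t)) t)
    (hW : ∀ t ≥ (0:ℝ), ∀ i j, HasDerivAt (fun s => Wt s i j)
          (γ * (σx t i * ((e t) ᵥ* (P * B)) j)) t)
    (heL : ∀ t ≥ (0:ℝ), HasDerivAt eL (Ar *ᵥ eL t + η • (e t - eL t)) t)
    (hxt : ∀ t ≥ (0:ℝ), HasDerivAt xt (Ar *ᵥ xt t + κ • (e t - eL t)) t) :
    AntitoneOn (fun s => Vstar γ κ η ξ P R hP.1 hR.1 Lhalf (e s) (Wt s) (eL s) (xt s))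
      (Set.Ici 0) := by
  have hV (t : ℝ) (ht : 0 ≤ t) := hasDerivAt_Vstar hP.1 hR.1 hLyap hLhalfDiag hLhalfSq hγ.ne'
    hη.ne' (ξ := ξ) (he t ht) (hW t ht) (heL t ht) (hxt t ht)
  have hc := Vstar_coeff_pos hP hR hκ hξ0
  have hcκ : 2 * ξ * κ⁻¹ * (lamMax hP.1)⁻¹ * lamMin hR.1 * κ * lamMax hP.1 ≤ 2 * lamMin hR.1 := by
    have := lamMax_pos hP
    calc _ = 2 * lamMin hR.1 * ξ := by field_simp
      _ ≤ 2 * lamMin hR.1 := mul_le_of_le_one_right (by linarith [lamMin_pos hR]) hξ1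
  have hint : ∀ t ∈ interior (Set.Ici (0:ℝ)), 0 ≤ t := fun t ht => by
    rw [interior_Ici] at ht
    exact ht.le
  exact antitoneOn_of_hasDerivWithinAt_nonpos (convex_Ici 0)
    (fun t ht => (hV t ht).continuousAt.continuousWithinAt)
    (fun t ht => (hV t (hint t ht)).hasDerivWithinAt)
    (fun t _ => closedLoop_rate_nonpos hP.posSemidef hR.posSemidef hκ.le hη.le hc.le hcκ _ _ _)

end Vstar

section VstarBounds

variable {n N m : ℕ} [NeZero n] {P R : Matrix (Fin n) (Fin n) ℝ} {L : Matrix (Fin m) (Fin m) ℝ}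
  {γ κ η ξ a : ℝ} {e eL x : Fin n → ℝ} {W : Matrix (Fin N) (Fin m) ℝ}

lemma lamMin_mul_add_le_Vstar (hP : P.PosDef) (hR : R.PosDef) (hγ : 0 ≤ γ) (hκ : 0 < κ)
    (hη : 0 ≤ η) (hξ : 0 < ξ) :
    lamMin hP.1 * (e ⬝ᵥ e)
        + 2 * ξ * κ⁻¹ * (lamMax hP.1)⁻¹ * lamMin hR.1 * (lamMin hP.1 * (x ⬝ᵥ x))
      ≤ Vstar γ κ η ξ P R hP.1 hR.1 L e W eL x := by
  have hW : 0 ≤ γ⁻¹ * ((W * L)ᵀ * (W * L)).trace := by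
    rw [trace_transpose_mul_self_eq_normF_sq]
    positivity
  have heL := mul_nonneg (mul_nonneg (inv_nonneg.2 hη) hκ.le)
    (hP.posSemidef.dotProduct_mulVec_self_nonneg eL)
  have hx := mul_le_mul_of_nonneg_left (lamMin_mul_dotProduct_self_le hP.1 x)
    (Vstar_coeff_pos hP hR hκ hξ).le
  have he := lamMin_mul_dotProduct_self_le hP.1 e
  simp only [Vstar, Vlyap]
  linarith

lemma norm_error_le_of_Vstar_le (hP : P.PosDef) (hR : R.PosDef) (hγ : 0 < γ) (hκ : 0 < κ)
    (hη : 0 ≤ η) (hξ : 0 < ξ) (ha : 0 ≤ a)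
    (h : Vstar γ κ η ξ P R hP.1 hR.1 L e W eL x ≤ γ⁻¹ * a ^ 2) :
    ‖e‖ ≤ (√γ)⁻¹ * (a / √(lamMin hP.1)) := by
  have hlam := lamMin_pos hP
  have hx : 0 ≤ 2 * ξ * κ⁻¹ * (lamMax hP.1)⁻¹ * lamMin hR.1 * (lamMin hP.1 * (x ⬝ᵥ x)) :=
    mul_nonneg (Vstar_coeff_pos hP hR hκ hξ).le
      (mul_nonneg hlam.le (dotProduct_self_nonneg x))
  have hV := (lamMin_mul_add_le_Vstar hP hR hγ.le hκ hη hξ).trans h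
  refine norm_le_of_dotProduct_self_le_sq (by positivity) ?_
  rw [mul_pow, div_pow, inv_pow, Real.sq_sqrt hγ.le, Real.sq_sqrt hlam.le, mul_div_assoc',
    le_div_iff₀ hlam]
  linarith

lemma norm_deviation_le_of_Vstar_le (hP : P.PosDef) (hR : R.PosDef) (hγ : 0 < γ) (hκ : 0 < κ)
    (hη : 0 ≤ η) (hξ : 0 < ξ) (ha : 0 ≤ a)
    (h : Vstar γ κ η ξ P R hP.1 hR.1 L e W eL x ≤ γ⁻¹ * a ^ 2) :
    ‖x‖ ≤ (√γ)⁻¹ * (a / √(lamMin hP.1)) * (√κ * √(lamMax hP.1 / (2 * ξ * lamMin hR.1))) := by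
  have hlam := lamMin_pos hP
  have hlamR := lamMin_pos hR
  have hlamP := lamMax_pos hP
  have he : 0 ≤ lamMin hP.1 * (e ⬝ᵥ e) :=
    mul_nonneg hlam.le (dotProduct_self_nonneg e)
  have hV := (lamMin_mul_add_le_Vstar hP hR hγ.le hκ hη hξ).trans h
  refine norm_le_of_dotProduct_self_le_sq (by positivity) ?_
  rw [mul_pow, mul_pow, mul_pow, div_pow, inv_pow, Real.sq_sqrt hγ.le, Real.sq_sqrt hlam.le,
    Real.sq_sqrt hκ.le, Real.sq_sqrt (by positivity)]
  have hc : γ⁻¹ * (a ^ 2 / lamMin hP.1) * (κ * (lamMax hP.1 / (2 * ξ * lamMin hR.1)))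
      = γ⁻¹ * a ^ 2 / (2 * ξ * κ⁻¹ * (lamMax hP.1)⁻¹ * lamMin hR.1 * lamMin hP.1) := by
    field_simp
  rw [hc, le_div_iff₀ (by positivity)]
  linarith

end VstarBounds

theorem statement9_general
    {n N m : ℕ} (hn : 0 < n)
    (Ar : Matrix (Fin n) (Fin n) ℝ) (B : Matrix (Fin n) (Fin m) ℝ)
    (Lam Lhalf : Matrix (Fin m) (Fin m) ℝ) (R P : Matrix (Fin n) (Fin n) ℝ)
    (hLhalfDiag : Lhalf.IsDiag) (hLhalfSq : Lhalf * Lhalf = Lam)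
    (hR : R.PosDef) (hP : P.PosDef)
    (hLyap : Arᵀ * P + P * Ar + R = 0)
    (γ κ η ξ : ℝ) (hγ : 0 < γ) (hκ : 0 < κ) (hη : 0 < η) (hξ0 : 0 < ξ) (hξ1 : ξ < 1)
    (σx : ℝ → Fin N → ℝ)
    (e eL xt : ℝ → Fin n → ℝ) (Wt : ℝ → Matrix (Fin N) (Fin m) ℝ)
    (heL0 : eL 0 = 0) (hxt0 : xt 0 = 0)
    (he : ∀ t ≥ (0:ℝ), HasDerivAt e
          (Ar *ᵥ e t - (B * Lam * (Wt t)ᵀ) *ᵥ σx t - κ • (e t - eL t)) t)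
    (hW : ∀ t ≥ (0:ℝ), ∀ i j, HasDerivAt (fun s => Wt s i j)
          (γ * (σx t i * ((e t) ᵥ* (P * B)) j)) t)
    (heL : ∀ t ≥ (0:ℝ), HasDerivAt eL (Ar *ᵥ eL t + η • (e t - eL t)) t)
    (hxt : ∀ t ≥ (0:ℝ), HasDerivAt xt (Ar *ᵥ xt t + κ • (e t - eL t)) t)
    (he0 : e 0 = 0)
    : (∀ t ≥ (0:ℝ),
        normInf (e t + xt t)
          ≤ (Real.sqrt γ)⁻¹ * (normF (Wt 0 * Lhalf) / Real.sqrt (lamMin hP.1))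
            * (1 + Real.sqrt κ * Real.sqrt (lamMax hP.1 / (2 * ξ * lamMin hR.1))))
      ∧ Tendsto (fun g : ℝ => (Real.sqrt g)⁻¹ * (normF (Wt 0 * Lhalf) / Real.sqrt (lamMin hP.1))
            * (1 + Real.sqrt κ * Real.sqrt (lamMax hP.1 / (2 * ξ * lamMin hR.1))))
          atTop (nhds 0) := by
  have : NeZero n := ⟨hn.ne'⟩
  have hV (t : ℝ) (ht : 0 ≤ t) : Vstar γ κ η ξ P R hP.1 hR.1 Lhalf (e t) (Wt t) (eL t) (xt t)
      ≤ γ⁻¹ * normF (Wt 0 * Lhalf) ^ 2 := by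
    calc _ ≤ Vstar γ κ η ξ P R hP.1 hR.1 Lhalf (e 0) (Wt 0) (eL 0) (xt 0) :=
          Vstar_antitoneOn hP hR hLyap hLhalfDiag hLhalfSq hγ hκ hη hξ0 hξ1.le he hW heL hxt
            Set.self_mem_Ici ht ht
      _ = _ := by rw [he0, heL0, hxt0, Vstar_zero]
  have ha : 0 ≤ normF (Wt 0 * Lhalf) := Real.sqrt_nonneg _
  refine ⟨fun t ht => ?_, ?_⟩
  · rw [mul_one_add]
    exact (norm_add_le _ _).trans <| add_le_add
      (norm_error_le_of_Vstar_le hP hR hγ hκ hη.le hξ0 ha (hV t ht))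
      (norm_deviation_le_of_Vstar_le hP hR hγ hκ hη.le hξ0 ha (hV t ht))
  · simpa using ((tendsto_inv_atTop_zero.comp Real.tendsto_sqrt_atTop).mul_const _).mul_const _

theorem statement9
    {n N m : ℕ} (hn : 0 < n) (hN : 0 < N) (hm : 0 < m)
    (Ar : Matrix (Fin n) (Fin n) ℝ) (B : Matrix (Fin n) (Fin m) ℝ)
    (Lam Lhalf : Matrix (Fin m) (Fin m) ℝ) (R P : Matrix (Fin n) (Fin n) ℝ)
    (hAr : Hurwitz Ar)
    (hLam : Lam.PosDef) (hLamDiag : Lam.IsDiag)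
    (hLhalfDiag : Lhalf.IsDiag) (hLhalfSq : Lhalf * Lhalf = Lam)
    (hR : R.PosDef) (hP : P.PosDef)
    (hLyap : Arᵀ * P + P * Ar + R = 0)
    (γ κ η ξ : ℝ) (hγ : 0 < γ) (hκ : 0 < κ) (hη : 0 < η) (hξ0 : 0 < ξ) (hξ1 : ξ < 1)
    (σx : ℝ → Fin N → ℝ)
    (e eL xt : ℝ → Fin n → ℝ) (Wt : ℝ → Matrix (Fin N) (Fin m) ℝ)
    (heL0 : eL 0 = 0) (hxt0 : xt 0 = 0)
    (he : ∀ t ≥ (0:ℝ), HasDerivAt e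
          (Ar *ᵥ e t - (B * Lam * (Wt t)ᵀ) *ᵥ σx t - κ • (e t - eL t)) t)
    (hW : ∀ t ≥ (0:ℝ), ∀ i j, HasDerivAt (fun s => Wt s i j)
          (γ * (σx t i * ((e t) ᵥ* (P * B)) j)) t)
    (heL : ∀ t ≥ (0:ℝ), HasDerivAt eL (Ar *ᵥ eL t + η • (e t - eL t)) t)
    (hxt : ∀ t ≥ (0:ℝ), HasDerivAt xt (Ar *ᵥ xt t + κ • (e t - eL t)) t)
    (he0 : e 0 = 0)
    : (∀ t ≥ (0:ℝ),
        normInf (e t + xt t)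
          ≤ (Real.sqrt γ)⁻¹ * (normF (Wt 0 * Lhalf) / Real.sqrt (lamMin hP.1))
            * (1 + Real.sqrt κ * Real.sqrt (lamMax hP.1 / (2 * ξ * lamMin hR.1))))
      ∧ Tendsto (fun g : ℝ => (Real.sqrt g)⁻¹ * (normF (Wt 0 * Lhalf) / Real.sqrt (lamMin hP.1))
            * (1 + Real.sqrt κ * Real.sqrt (lamMax hP.1 / (2 * ξ * lamMin hR.1))))
          atTop (nhds 0) :=
  statement9_general hn Ar B Lam Lhalf R P hLhalfDiag hLhalfSq hR hP hLyap γ κ η ξ hγ hκ hη hξ0 hξ1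
    σx e eL xt Wt heL0 hxt0 he hW heL hxt he0
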